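/- For every r > 0, the mixture over u uniform on [0,1] of the probability measures on (0, ∞) with densities f_{ru} equals the probability measure with density p_r; i.e., denoting by μ_a the measure on (0, ∞) with Lebesgue density f_a(t) = (|a|/√(2πt³))·exp(−a²/(2t)), the measure ∫₀¹ μ_{ru} du (the bind of Lebesgue measure restricted to [0,1] with the kernel u ↦ μ_{ru}) equals the measure on (0, ∞) with Lebesgue density p_r(t) = (1/(r·√(2πt)))·(1 − exp(−r²/(2t))). -/

import Mathlib

open MeasureTheory Real

/-- The measure `μ_a` on `(0, ∞)` with Lebesgue density
`f_a(t) = (|a|/√(2πt³)) exp(−a²/(2t))` (the law of the first hitting time of level `a` by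
standard Brownian motion started at `0`). -/
noncomputable def firstPassageMeasure (a : ℝ) : Measure ℝ :=
  (volume.restrict (Set.Ioi (0 : ℝ))).withDensity
    (fun t => ENNReal.ofReal (|a| / Real.sqrt (2 * Real.pi * t ^ 3) * Real.exp (-a ^ 2 / (2 * t))))

/-- The measure on `(0, ∞)` with Lebesgue density
`p_r(t) = (1/(r√(2πt))) (1 − exp(−r²/(2t)))` (the law of the time at which the BES(3) process
started at `r > 0` attains its ultimate minimum). -/
noncomputable def ultimateMinimumTimeMeasure (r : ℝ) : Measure ℝ :=
  (volume.restrict (Set.Ioi (0 : ℝ))).withDensity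
    (fun t => ENNReal.ofReal
      (1 / (r * Real.sqrt (2 * Real.pi * t)) * (1 - Real.exp (-r ^ 2 / (2 * t)))))

/-!
By Tonelli, a mixture of measures with densities `f (u, ·)` has density `t ↦ ∫ f (u, t) du`, so it
suffices to check `∫₀¹ f_{ru}(t) du = p_r(t)` for `t > 0`. This is elementary: the integrand is
`u ↦ r u e^{-r²u²/(2t)} / √(2πt³)`, whose antiderivative is `-(t / r) e^{-r²u²/(2t)} / √(2πt³)`.
-/

theorem intervalIntegral.integral_mul_exp_neg_mul_sq {b : ℝ} (hb : b ≠ 0) (x : ℝ) :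
    ∫ u in (0 : ℝ)..x, u * exp (-b * u ^ 2) = (1 - exp (-b * x ^ 2)) / (2 * b) := by
  have hderiv : ∀ u ∈ Set.uIcc 0 x,
      HasDerivAt (fun u => -(2 * b)⁻¹ * exp (-b * u ^ 2)) (u * exp (-b * u ^ 2)) u := by
    intro u _
    refine ((((hasDerivAt_pow 2 u).const_mul (-b)).exp).const_mul (-(2 * b)⁻¹)).congr_deriv ?_
    field_simp
    ring
  rw [intervalIntegral.integral_eq_sub_of_hasDerivAt hderiv
    (Continuous.intervalIntegrable (by fun_prop) _ _), zero_pow two_ne_zero, mul_zero, exp_zero]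
  field_simp
  ring

open ProbabilityTheory in
theorem MeasureTheory.Measure.bind_withDensity_eq_withDensity_lintegral {α β : Type*}
    [MeasurableSpace α] [MeasurableSpace β] {μ : Measure α} [SFinite μ] {ν : Measure β}
    [SFinite ν] {f : α → β → ENNReal} (hf : Measurable (Function.uncurry f)) :
    μ.bind (fun a => ν.withDensity (f a)) = ν.withDensity (fun b => ∫⁻ a, f a b ∂μ) := by
  have hker : Measurable (fun a => ν.withDensity (f a)) := by
    convert (Kernel.withDensity (Kernel.const α ν) f).measurable using 1
    funext a
    rw [Kernel.withDensity_apply _ hf, Kernel.const_apply]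
  ext s hs
  rw [Measure.bind_apply hs hker.aemeasurable, withDensity_apply _ hs,
    ← lintegral_lintegral_swap hf.aemeasurable]
  exact lintegral_congr fun a => withDensity_apply _ hs

theorem lintegral_Icc_firstPassageDensity_mul_eq {r t : ℝ} (hr : 0 < r) (ht : 0 < t) :
    ∫⁻ u in Set.Icc (0 : ℝ) 1,
        ENNReal.ofReal (|r * u| / √(2 * π * t ^ 3) * exp (-(r * u) ^ 2 / (2 * t)))
      = ENNReal.ofReal (1 / (r * √(2 * π * t)) * (1 - exp (-r ^ 2 / (2 * t)))) := by
  rw [← ofReal_integral_eq_lintegral_ofReal (Continuous.integrableOn_Icc (by fun_prop))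
    (ae_of_all _ fun u => by positivity)]
  congr 1
  have hsqrt : √(2 * π * t ^ 3) = t * √(2 * π * t) := by
    rw [show 2 * π * t ^ 3 = t ^ 2 * (2 * π * t) by ring, sqrt_mul (by positivity),
      sqrt_sq ht.le]
  calc ∫ u in Set.Icc (0 : ℝ) 1, |r * u| / √(2 * π * t ^ 3) * exp (-(r * u) ^ 2 / (2 * t))
      = ∫ u in (0 : ℝ)..1, r / √(2 * π * t ^ 3) * (u * exp (-(r ^ 2 / (2 * t)) * u ^ 2)) := by
        rw [integral_Icc_eq_integral_Ioc, ← intervalIntegral.integral_of_le zero_le_one]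
        refine intervalIntegral.integral_congr fun u hu => ?_
        rw [Set.uIcc_of_le zero_le_one] at hu
        rw [abs_of_nonneg (mul_nonneg hr.le hu.1),
          show -(r * u) ^ 2 / (2 * t) = -(r ^ 2 / (2 * t)) * u ^ 2 by ring]
        ring
    _ = r / √(2 * π * t ^ 3) *
          ((1 - exp (-(r ^ 2 / (2 * t)) * 1 ^ 2)) / (2 * (r ^ 2 / (2 * t)))) := by
        rw [intervalIntegral.integral_const_mul,
          intervalIntegral.integral_mul_exp_neg_mul_sq (by positivity)]
    _ = 1 / (r * √(2 * π * t)) * (1 - exp (-r ^ 2 / (2 * t))) := by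
        rw [hsqrt]
        field_simp

/-- The mixture over `u` uniform on `[0,1]` of the first-passage laws `μ_{ru}` equals the law
with density `p_r`: `∫₀¹ μ_{ru} du = p_r(t) dt` (formula (2) combined with (d) of the paper). -/
theorem uniform_mixture_firstPassageMeasure (r : ℝ) (hr : 0 < r) :
    (volume.restrict (Set.Icc (0 : ℝ) 1)).bind (fun u => firstPassageMeasure (r * u))
      = ultimateMinimumTimeMeasure r := by
  have hdensity : Measurable (Function.uncurry fun u t => ENNReal.ofReal
      (|r * u| / √(2 * π * t ^ 3) * exp (-(r * u) ^ 2 / (2 * t)))) := by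
    fun_prop
  unfold firstPassageMeasure ultimateMinimumTimeMeasure
  rw [Measure.bind_withDensity_eq_withDensity_lintegral hdensity]
  refine withDensity_congr_ae ?_
  filter_upwards [ae_restrict_mem measurableSet_Ioi] with t ht
  exact lintegral_Icc_firstPassageDensity_mul_eq hr ht
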